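/- Let A ∈ {0,1}^{m×n} be a binary measurement matrix with no all-zero column and let T ⊆ V satisfy the termatiko condition. Set y = A·1_T, N = N(T), and S = {v ∈ V∖T : N(v) ⊆ N}. Then for every iteration ℓ ≥ 0 of the IPA run on (y, A): (a) μ^{(ℓ)}_v = 0 for every v ∈ V; (b) M^{(ℓ)}_v ≥ 1 for every v ∈ T ∪ S; and (c) every c ∈ N with N(c) ∩ S = ∅ has two distinct neighbors v₁, v₂ ∈ N_T(c) with M^{(ℓ)}_{v₁} ≥ 2 and M^{(ℓ)}_{v₂} ≥ 2. In particular, T is a termatiko set of A. -/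

import Mathlib

open scoped Classical
open Finset

variable {C V : Type*} [Fintype C] [Fintype V]

/-- The IPA lower/upper bounds `(μ^{(ℓ)}, M^{(ℓ)})` computed from measurement
matrix `A` and measurement vector `y`. -/
noncomputable def ipa (A : C → V → ℝ) (y : C → ℝ) : ℕ → (V → ℝ) × (V → ℝ)
  | 0 => (fun _ => 0,
      fun v => sInf {r : ℝ | ∃ c, A c v ≠ 0 ∧ r = y c / A c v})
  | ℓ + 1 =>
      (fun v => sSup {r : ℝ | ∃ c, A c v ≠ 0 ∧
          r = max 0 ((y c - ∑ v' ∈ Finset.univ.filter (fun v' => v' ≠ v),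
              A c v' * (ipa A y ℓ).2 v') / A c v)},
       fun v => sInf {r : ℝ | ∃ c, A c v ≠ 0 ∧
          r = (y c - ∑ v' ∈ Finset.univ.filter (fun v' => v' ≠ v),
              A c v' * (ipa A y ℓ).1 v') / A c v})

/-- IPA lower bound `μ^{(ℓ)}_v`. -/
noncomputable def ipaMu (A : C → V → ℝ) (y : C → ℝ) (ℓ : ℕ) (v : V) : ℝ := (ipa A y ℓ).1 v

/-- IPA upper bound `M^{(ℓ)}_v`. -/
noncomputable def ipaM (A : C → V → ℝ) (y : C → ℝ) (ℓ : ℕ) (v : V) : ℝ := (ipa A y ℓ).2 v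

/-- Neighbourhood `N(v)` of a variable node. -/
noncomputable def Nv (A : C → V → ℝ) (v : V) : Finset C := Finset.univ.filter fun c => A c v ≠ 0

/-- Neighbourhood `N(c)` of a measurement node. -/
noncomputable def Nc (A : C → V → ℝ) (c : C) : Finset V := Finset.univ.filter fun v => A c v ≠ 0

/-- Neighbourhood `N(T)` of a set of variable nodes. -/
noncomputable def NT (A : C → V → ℝ) (T : Finset V) : Finset C :=
  Finset.univ.filter fun c => ∃ v ∈ T, A c v ≠ 0

/-- `N_T(c) = N(c) ∩ T`. -/
noncomputable def NTc (A : C → V → ℝ) (T : Finset V) (c : C) : Finset V :=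
  T.filter fun v => A c v ≠ 0

/-- A stopping set: every neighbouring measurement node is connected at least twice to `T`. -/
def StoppingSet (A : C → V → ℝ) (T : Finset V) : Prop :=
  ∀ c ∈ NT A T, 2 ≤ (NTc A T c).card

/-- The set `S` of variable nodes outside `T` connected only to `N(T)`. -/
noncomputable def Sset (A : C → V → ℝ) (T : Finset V) : Finset V :=
  Finset.univ.filter fun v => v ∉ T ∧ ∀ c, A c v ≠ 0 → c ∈ NT A T

/-- The termatiko condition on a set `T` of variable nodes. -/
def TermatikoCond (A : C → V → ℝ) (T : Finset V) : Prop :=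
  ∀ c ∈ NT A T,
    (∃ v ∈ Sset A T, A c v ≠ 0) ∨
    2 ≤ ((NTc A T c).filter fun v => ∀ c', A c' v ≠ 0 → 2 ≤ (NTc A T c').card).card

/-- Real-valued indicator vector `1_T` of a set of variable nodes. -/
noncomputable def indVec (T : Finset V) : V → ℝ := fun v => if v ∈ T then 1 else 0

/-- The measurement vector `A · 1_T`. -/
noncomputable def measT (A : C → V → ℝ) (T : Finset V) : C → ℝ :=
  fun c => ∑ v, A c v * indVec T v

/-- `T` is a termatiko set of `A`: the IPA run on `A · 1_T` keeps all lower bounds at zero. -/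
def IsTermatiko (A : C → V → ℝ) (T : Finset V) : Prop :=
  ∀ (ℓ : ℕ) (v : V), ipaMu A (measT A T) ℓ v = 0

/-- `A` is a binary (0/1) matrix. -/
def Binary (A : C → V → ℝ) : Prop := ∀ c v, A c v = 0 ∨ A c v = 1

/-- `A` has no all-zero column. -/
def NoZeroCol (A : C → V → ℝ) : Prop := ∀ v, ∃ c, A c v ≠ 0

/-- `A` has nonnegative entries. -/
def MatNonneg (A : C → V → ℝ) : Prop := ∀ c v, 0 ≤ A c v

/-!
For binary `A` and `y = A·1_T` we have `y_c = |N_T(c)|`, so `M⁽⁰⁾_v` is the least `|N_T(c)|`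
over `c ∈ N(v)`: it is at least `1` on `T ∪ S`, and at least `2` on the nodes of `T` all of whose
measurement nodes see `T` twice. The termatiko condition then gives, for every edge `(c, v)`,
`y_c ≤ ∑_{v' ∈ N(c) ∖ {v}} M⁽⁰⁾_{v'}`, so every lower-bound message is `0`. With all lower bounds
`0` the upper-bound messages are those of round `0`, so `(0, M⁽⁰⁾)` is a fixed point of the IPA.
-/

theorem card_sub_one_le_sum_erase {α : Type*} [DecidableEq α] {s : Finset α} {w : α → ℝ}
    (hw : ∀ x ∈ s, 1 ≤ w x) (a : α) : (#s : ℝ) - 1 ≤ ∑ x ∈ s.erase a, w x := by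
  have hcard : #s ≤ #(s.erase a) + 1 := by
    have := pred_card_le_card_erase (s := s) (a := a)
    omega
  have hsum : (#(s.erase a) : ℝ) ≤ ∑ x ∈ s.erase a, w x := by
    simpa using card_nsmul_le_sum (s.erase a) w 1 fun x hx => hw x (mem_of_mem_erase hx)
  have : (#s : ℝ) ≤ #(s.erase a) + 1 := by exact_mod_cast hcard
  linarith

theorem card_add_card_sub_two_le_sum_erase {α : Type*} [DecidableEq α] {s t : Finset α}
    {w : α → ℝ} (hts : t ⊆ s) (hs : ∀ x ∈ s, 1 ≤ w x) (ht : ∀ x ∈ t, 2 ≤ w x) (a : α) :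
    (#s + #t : ℝ) - 2 ≤ ∑ x ∈ s.erase a, w x := by
  have hs' : (#s : ℝ) - 1 ≤ ∑ x ∈ s.erase a, (1 : ℝ) :=
    card_sub_one_le_sum_erase (fun _ _ => le_rfl) a
  have ht' : (#t : ℝ) - 1 ≤ ∑ x ∈ t.erase a, (w x - 1) :=
    card_sub_one_le_sum_erase (fun x hx => by linarith [ht x hx]) a
  have hmono : ∑ x ∈ t.erase a, (w x - 1) ≤ ∑ x ∈ s.erase a, (w x - 1) :=
    sum_le_sum_of_subset_of_nonneg (erase_subset_erase a hts) fun x hx _ => by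
      linarith [hs x (mem_of_mem_erase hx)]
  have hsplit : ∑ x ∈ s.erase a, w x = ∑ x ∈ s.erase a, (1 : ℝ) + ∑ x ∈ s.erase a, (w x - 1) := by
    rw [← sum_add_distrib]
    simp
  linarith

theorem sSup_setOf_eq_of_forall_eq {ι : Type*} {P : ι → Prop} {f : ι → ℝ} {a : ℝ}
    (hP : ∃ i, P i) (hf : ∀ i, P i → f i = a) : sSup {r : ℝ | ∃ i, P i ∧ r = f i} = a := by
  obtain ⟨i₀, hi₀⟩ := hP
  have hset : {r : ℝ | ∃ i, P i ∧ r = f i} = {a} :=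
    Set.eq_singleton_iff_unique_mem.2
      ⟨⟨i₀, hi₀, (hf i₀ hi₀).symm⟩, by rintro r ⟨i, hi, rfl⟩; exact hf i hi⟩
  rw [hset, csSup_singleton]

omit [Fintype C] [Fintype V] in
theorem Binary.matNonneg {A : C → V → ℝ} (hbin : Binary A) : MatNonneg A := fun c v => by
  rcases hbin c v with h | h <;> simp [h]

section IPA

variable {A : C → V → ℝ} {y : C → ℝ}

omit [Fintype C]

theorem ipaMu_succ (ℓ : ℕ) (v : V) :
    ipaMu A y (ℓ + 1) v = sSup {r : ℝ | ∃ c, A c v ≠ 0 ∧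
      r = max 0 ((y c - ∑ v' ∈ univ.filter (fun v' => v' ≠ v), A c v' * ipaM A y ℓ v') / A c v)} :=
  rfl

theorem ipaM_succ (ℓ : ℕ) (v : V) :
    ipaM A y (ℓ + 1) v = sInf {r : ℝ | ∃ c, A c v ≠ 0 ∧
      r = (y c - ∑ v' ∈ univ.filter (fun v' => v' ≠ v), A c v' * ipaMu A y ℓ v') / A c v} :=
  rfl

theorem le_ipaM_zero {v : V} (hv : ∃ c, A c v ≠ 0) {b : ℝ}
    (hb : ∀ c, A c v ≠ 0 → b ≤ y c / A c v) : b ≤ ipaM A y 0 v := by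
  obtain ⟨c₀, hc₀⟩ := hv
  refine le_csInf ⟨y c₀ / A c₀ v, c₀, hc₀, rfl⟩ ?_
  rintro r ⟨c, hc, rfl⟩
  exact hb c hc

theorem ipa_stationary (hcol : NoZeroCol A) (hA : MatNonneg A)
    (hy : ∀ c v, A c v ≠ 0 →
      y c ≤ ∑ v' ∈ univ.filter (fun v' => v' ≠ v), A c v' * ipaM A y 0 v') (ℓ : ℕ) :
    ipaMu A y ℓ = 0 ∧ ipaM A y ℓ = ipaM A y 0 := by
  induction ℓ with
  | zero => exact ⟨rfl, rfl⟩
  | succ ℓ ih =>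
    obtain ⟨hμ, hM⟩ := ih
    constructor
    · funext v
      rw [ipaMu_succ, hM, Pi.zero_apply]
      exact sSup_setOf_eq_of_forall_eq (hcol v) fun c hc =>
        max_eq_left (div_nonpos_of_nonpos_of_nonneg (sub_nonpos.2 (hy c v hc)) (hA c v))
    · funext v
      rw [ipaM_succ, hμ]
      simp only [Pi.zero_apply, mul_zero, sum_const_zero, sub_zero]
      rfl

end IPA

section Termatiko

variable {A : C → V → ℝ} {T : Finset V}

omit [Fintype C] in
theorem measT_eq_card (hbin : Binary A) (c : C) : measT A T c = #(NTc A T c) := by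
  simp only [measT, indVec, mul_ite, mul_one, mul_zero, sum_ite_mem, univ_inter]
  rw [NTc, ← sum_boole]
  refine sum_congr rfl fun v _ => ?_
  rcases hbin c v with h | h <;> simp [h]

omit [Fintype V] in
theorem mem_NT_iff_nonempty_NTc {c : C} : c ∈ NT A T ↔ (NTc A T c).Nonempty := by
  simp [NT, NTc, Finset.Nonempty]

theorem mem_NT_of_mem_union_Sset [DecidableEq V] {c : C} {v : V} (hv : v ∈ T ∪ Sset A T)
    (hc : A c v ≠ 0) : c ∈ NT A T := by
  rcases mem_union.1 hv with hvT | hvS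
  · exact mem_filter.2 ⟨mem_univ c, v, hvT, hc⟩
  · simp only [Sset, mem_filter] at hvS
    exact hvS.2.2 c hc

omit [Fintype C] in
theorem le_ipaM_zero_measT (hbin : Binary A) (hcol : NoZeroCol A) {v : V} {b : ℝ}
    (hb : ∀ c, A c v ≠ 0 → b ≤ #(NTc A T c)) : b ≤ ipaM A (measT A T) 0 v :=
  le_ipaM_zero (hcol v) fun c hc => by
    rw [(hbin c v).resolve_left hc, div_one, measT_eq_card hbin]
    exact hb c hc

theorem one_le_ipaM_zero_measT [DecidableEq V] (hbin : Binary A) (hcol : NoZeroCol A) {v : V}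
    (hv : v ∈ T ∪ Sset A T) : 1 ≤ ipaM A (measT A T) 0 v :=
  le_ipaM_zero_measT hbin hcol fun _ hc =>
    Nat.one_le_cast.2 (mem_NT_iff_nonempty_NTc.1 (mem_NT_of_mem_union_Sset hv hc)).card_pos

omit [Fintype C] in
theorem two_le_ipaM_zero_measT (hbin : Binary A) (hcol : NoZeroCol A) {v : V}
    (hv : ∀ c, A c v ≠ 0 → 2 ≤ #(NTc A T c)) : 2 ≤ ipaM A (measT A T) 0 v :=
  le_ipaM_zero_measT hbin hcol fun c hc => by exact_mod_cast hv c hc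

omit [Fintype C] in
theorem sum_erase_le_sum_filter_ne_mul (hbin : Binary A) {w : V → ℝ} (hw : ∀ x, 0 ≤ w x)
    {c : C} {s : Finset V} (hs : ∀ x ∈ s, A c x ≠ 0) (v : V) :
    ∑ x ∈ s.erase v, w x ≤ ∑ x ∈ univ.filter (fun x => x ≠ v), A c x * w x := by
  rw [filter_ne']
  calc ∑ x ∈ s.erase v, w x = ∑ x ∈ s.erase v, A c x * w x :=
        sum_congr rfl fun x hx => by
          rw [(hbin c x).resolve_left (hs x (mem_of_mem_erase hx)), one_mul]
    _ ≤ _ := sum_le_sum_of_subset_of_nonneg (erase_subset_erase v (subset_univ s))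
        fun x _ _ => mul_nonneg (hbin.matNonneg c x) (hw x)

theorem measT_le_sum_ipaM_zero (hbin : Binary A) (hcol : NoZeroCol A) (hT : TermatikoCond A T)
    (c : C) (v : V) : measT A T c ≤
      ∑ v' ∈ univ.filter (fun v' => v' ≠ v), A c v' * ipaM A (measT A T) 0 v' := by
  have hsum := fun (s : Finset V) (hs : ∀ x ∈ s, A c x ≠ 0) =>
    sum_erase_le_sum_filter_ne_mul hbin (w := ipaM A (measT A T) 0)
      (fun x => le_ipaM_zero_measT hbin hcol fun _ _ => by positivity) hs v
  have hNTc : ∀ x ∈ NTc A T c, A c x ≠ 0 := fun x hx => (mem_filter.1 hx).2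
  rw [measT_eq_card hbin]
  by_cases hc : c ∈ NT A T
  · rcases hT c hc with ⟨u, huS, huc⟩ | hF
    · -- a neighbour in `S` makes up for the node `v` left out
      have huT : u ∉ NTc A T c := fun h => (mem_filter.1 huS).2.1 (mem_filter.1 h).1
      have hins : ∀ x ∈ insert u (NTc A T c), x ∈ T ∪ Sset A T ∧ A c x ≠ 0 := by
        simp only [forall_mem_insert]
        exact ⟨⟨mem_union_right T huS, huc⟩,
          fun x hx => ⟨mem_union_left _ (mem_filter.1 hx).1, hNTc x hx⟩⟩
      have h := card_sub_one_le_sum_erase (w := ipaM A (measT A T) 0)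
        (fun x hx => one_le_ipaM_zero_measT hbin hcol (hins x hx).1) v
      rw [card_insert_of_notMem huT] at h
      push_cast at h
      linarith [hsum _ fun x hx => (hins x hx).2]
    · -- two neighbours whose upper bound is `2` make up for `v`
      have h := card_add_card_sub_two_le_sum_erase (filter_subset _ (NTc A T c))
        (fun x hx => one_le_ipaM_zero_measT hbin hcol (mem_union_left _ (mem_filter.1 hx).1))
        (fun x hx => two_le_ipaM_zero_measT hbin hcol (mem_filter.1 hx).2) v
      have hF' : (2 : ℝ) ≤ #((NTc A T c).filter fun v =>
          ∀ c', A c' v ≠ 0 → 2 ≤ #(NTc A T c')) := by exact_mod_cast hF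
      linarith [hsum _ hNTc]
  · rw [not_nonempty_iff_eq_empty.1 (mt mem_NT_iff_nonempty_NTc.2 hc)]
    simpa using hsum ∅ (by simp)

end Termatiko

/-- if `T` satisfies the termatiko condition, then for the IPA run
on `y = A·1_T`: (a) all lower bounds stay `0`; (b) all upper bounds on `T ∪ S`
stay `≥ 1`; (c) every `c ∈ N(T)` not connected to `S` has two distinct neighbours
in `T` with upper bound `≥ 2`. In particular `T` is a termatiko set. -/
theorem termatikoCond_implies_invariants {m n : ℕ} (A : Fin m → Fin n → ℝ)
    (hbin : Binary A) (hcol : NoZeroCol A)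
    (T : Finset (Fin n)) (hT : TermatikoCond A T) :
    (∀ (ℓ : ℕ) (v : Fin n), ipaMu A (measT A T) ℓ v = 0) ∧
    (∀ (ℓ : ℕ), ∀ v ∈ T ∪ Sset A T, 1 ≤ ipaM A (measT A T) ℓ v) ∧
    (∀ (ℓ : ℕ), ∀ c ∈ NT A T, (∀ v ∈ Sset A T, A c v = 0) →
      ∃ v₁ ∈ NTc A T c, ∃ v₂ ∈ NTc A T c, v₁ ≠ v₂ ∧
        2 ≤ ipaM A (measT A T) ℓ v₁ ∧ 2 ≤ ipaM A (measT A T) ℓ v₂) ∧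
    IsTermatiko A T := by
  have hfix := ipa_stationary hcol hbin.matNonneg fun c v _ =>
    measT_le_sum_ipaM_zero hbin hcol hT c v
  have hμ (ℓ : ℕ) (v : Fin n) : ipaMu A (measT A T) ℓ v = 0 := congrFun (hfix ℓ).1 v
  refine ⟨hμ, fun ℓ v hv => ?_, fun ℓ c hc hS => ?_, hμ⟩
  · rw [(hfix ℓ).2]
    exact one_le_ipaM_zero_measT hbin hcol hv
  · obtain ⟨s, hsS, hsc⟩ | hF := hT c hc
    · exact absurd (hS s hsS) hsc
    obtain ⟨v₁, hv₁, v₂, hv₂, hne⟩ := one_lt_card.1 hF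
    simp only [mem_filter] at hv₁ hv₂
    rw [(hfix ℓ).2]
    exact ⟨v₁, hv₁.1, v₂, hv₂.1, hne, two_le_ipaM_zero_measT hbin hcol hv₁.2,
      two_le_ipaM_zero_measT hbin hcol hv₂.2⟩
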